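/- arXiv:math/9812085 — 5 statements merged into one kernel-verified Lean document; each statement's English description precedes it below -/
import Mathlib

section
/- If a bounded linear operator R on H satisfies w²Rw*² + q²R = (1+q²)·wRw*, then wRw* = R, i.e. R commutes with w. In other words, the only bounded solutions of this operator equation are the bounded operators commuting with w. -/
/-!
Put `S = w R w* - R`. The equation says exactly that `w S w* = q² S`; since `w* w = 1` this
gives `S = q² w* S w`, hence `‖S‖ ≤ q² ‖S‖` and `S = 0`. Then `w R = (w R w*) w = R w`.
-/

theorem mul_conj_sub_self_mul_eq_smul {K A : Type*} [CommRing K] [Ring A] [Module K A]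
    {u v X : A} {c : K} (h : u * (u * X * v) * v + c • X = (1 + c) • (u * X * v)) :
    u * (u * X * v - X) * v = c • (u * X * v - X) := by
  rw [mul_sub, sub_mul, eq_sub_of_add_eq h]
  module

theorem commute_of_mul_mul_eq_self {M : Type*} [Monoid M] {u v X : M} (h : v * u = 1)
    (hX : u * X * v = X) : Commute u X :=
  calc u * X = u * X * v * u := by rw [mul_assoc (u * X), h, mul_one]
    _ = X * u := by rw [hX]

section CStarRing

variable {A : Type*} [NormedRing A] [StarRing A] [CStarRing A]

theorem norm_le_one_of_star_mul_self_eq_one {w : A} (hw : star w * w = 1) : ‖w‖ ≤ 1 := by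
  rcases subsingleton_or_nontrivial A with _ | _
  · simp [Subsingleton.elim w 0]
  · have h : ‖w‖ * ‖w‖ = 1 := by rw [← CStarRing.norm_star_mul_self, hw, CStarRing.norm_one]
    nlinarith [norm_nonneg w]

theorem eq_zero_of_mul_mul_star_eq_smul {𝕜 : Type*} [NormedField 𝕜] [NormedAlgebra 𝕜 A]
    {w S : A} {c : 𝕜} (hw : star w * w = 1) (hc : ‖c‖ < 1) (hS : w * S * star w = c • S) :
    S = 0 := by
  have hS' : S = c • (star w * S * w) :=
    calc S = star w * (w * S * star w) * w := by
          simp only [← mul_assoc, hw, one_mul]; rw [mul_assoc, hw, mul_one]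
      _ = c • (star w * S * w) := by rw [hS, mul_smul_comm, smul_mul_assoc]
  have hw_norm := norm_le_one_of_star_mul_self_eq_one hw
  have hconj : ‖star w * S * w‖ ≤ ‖S‖ :=
    calc ‖star w * S * w‖ ≤ ‖star w‖ * ‖S‖ * ‖w‖ := norm_mul₃_le
      _ ≤ 1 * ‖S‖ * 1 := by rw [norm_star]; gcongr
      _ = ‖S‖ := by ring
  have hle : ‖S‖ ≤ ‖c‖ * ‖S‖ :=
    calc ‖S‖ = ‖c‖ * ‖star w * S * w‖ := by rw [← norm_smul, ← hS']
      _ ≤ ‖c‖ * ‖S‖ := mul_le_mul_of_nonneg_left hconj (norm_nonneg c)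
  exact norm_le_zero_iff.mp (by nlinarith [norm_nonneg S])

end CStarRing

theorem bounded_solutions_commute_general (q : ℝ) (hq0 : 0 < q) (hq1 : q < 1)
    (H : Type*) [NormedAddCommGroup H] [InnerProductSpace ℂ H] [CompleteSpace H]
    (w R : H →L[ℂ] H)
    (hw2 : ContinuousLinearMap.adjoint w ∘L w = 1)
    (hR : w ∘L w ∘L R ∘L ContinuousLinearMap.adjoint w ∘L ContinuousLinearMap.adjoint w
        + ((q ^ 2 : ℝ) : ℂ) • R
        = ((1 + q ^ 2 : ℝ) : ℂ) • (w ∘L R ∘L ContinuousLinearMap.adjoint w)) :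
    w ∘L R ∘L ContinuousLinearMap.adjoint w = R ∧ w ∘L R = R ∘L w := by
  simp only [← ContinuousLinearMap.mul_def, ← ContinuousLinearMap.star_eq_adjoint] at hw2 hR ⊢
  set c : ℂ := ((q ^ 2 : ℝ) : ℂ)
  have hc : ‖c‖ < 1 := by
    rw [Complex.norm_real, Real.norm_of_nonneg (by positivity)]
    nlinarith
  have hR' : w * (w * R * star w) * star w + c • R = (1 + c) • (w * R * star w) := by
    simpa only [mul_assoc, c, Complex.ofReal_add, Complex.ofReal_one] using hR
  have hconj : w * R * star w = R :=
    sub_eq_zero.mp (eq_zero_of_mul_mul_star_eq_smul hw2 hc (mul_conj_sub_self_mul_eq_smul hR'))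
  exact ⟨by simpa only [mul_assoc] using hconj, (commute_of_mul_mul_eq_self hw2 hconj).eq⟩

/-- Section 5 of the paper: the only bounded solutions of the operator equation
`w²Rw*² + q²R = (1+q²) wRw*` (equation (4-42)), with `w` unitary on a complex Hilbert
space, are the bounded operators commuting with `w`, i.e. `wRw* = R`. -/
theorem bounded_solutions_commute (q : ℝ) (hq0 : 0 < q) (hq1 : q < 1)
    (H : Type*) [NormedAddCommGroup H] [InnerProductSpace ℂ H] [CompleteSpace H]
    (w R : H →L[ℂ] H)
    (hw1 : w ∘L ContinuousLinearMap.adjoint w = 1)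
    (hw2 : ContinuousLinearMap.adjoint w ∘L w = 1)
    (hR : w ∘L w ∘L R ∘L ContinuousLinearMap.adjoint w ∘L ContinuousLinearMap.adjoint w
        + ((q ^ 2 : ℝ) : ℂ) • R
        = ((1 + q ^ 2 : ℝ) : ℂ) • (w ∘L R ∘L ContinuousLinearMap.adjoint w)) :
    w ∘L R ∘L ContinuousLinearMap.adjoint w = R ∧ w ∘L R = R ∘L w :=
  bounded_solutions_commute_general q hq0 hq1 H w R hw2 hR
end

section
/- With the notation of the model, for all η ∈ V and n ∈ ℕ one has (d∘F∘b − q⁻¹·b∘F∘d) η_n = −λ q^{n+1} (w⁻¹Tη)_n; equivalently, d∘F∘b − q⁻¹·b∘F∘d = λ·b∘T̂, where T̂ denotes the diagonal lift of T to W given by T̂ η_n := (Tη)_n. -/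
/-! On `η_n` each of `dFb` and `q⁻¹ bFd` has components only in degrees `n`, `n + 1`, `n + 2`.
In degree `n + 1` both equal `-λ_{n+1} q^{n+1} (wⁿ R w^{-(n+1)} η)_{n+1}`: the `w⁻¹` coming from `b`
absorbs one factor of `w`, and `q⁻¹` absorbs the extra `q`. In degree `n + 2` they agree because
`S w⁻¹ = q w⁻¹ S`. In degree `n`, `T w⁻¹ = q w⁻¹ T` leaves `q^n (λ_{n+1}² − q² λ_n²) w⁻¹Tη`, and
`λ_{n+1}² − q² λ_n² = 1 − q²` gives `−λ q^{n+1}`. -/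

/-- `lam q n = λ_n = (1 - q^(2n))^(1/2)`, so `lam q 0 = 0`. -/
noncomputable def lam (q : ℝ) (n : ℕ) : ℝ := Real.sqrt (1 - q ^ (2 * n))

lemma lam_zero (q : ℝ) : lam q 0 = 0 := by simp [lam]

lemma lam_sq {q : ℝ} (hq : |q| ≤ 1) (n : ℕ) : lam q n ^ 2 = 1 - q ^ (2 * n) := by
  rw [lam, Real.sq_sqrt]
  rw [sub_nonneg, pow_mul, ← sq_abs]
  exact pow_le_one₀ (sq_nonneg _) (pow_le_one₀ (abs_nonneg q) hq)

namespace LinearEquiv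

variable {R M : Type*} [Semiring R] [AddCommMonoid M] [Module R M]

lemma symm_apply_pow_succ_apply (w : M ≃ₗ[R] M) (n : ℕ) (x : M) :
    w.symm ((w ^ (n + 1)) x) = (w ^ n) x := by
  rw [pow_succ', mul_apply, symm_apply_apply]

lemma pow_apply_symm_apply (w : M ≃ₗ[R] M) (n : ℕ) (x : M) :
    (w.symm ^ n) (w.symm x) = (w.symm ^ (n + 1)) x := by
  rw [pow_succ, mul_apply]

lemma apply_symm_apply_of_conj_eq_smul (w : M ≃ₗ[R] M) {T : M →ₗ[R] M} {c : R}
    (h : ∀ x, w (T (w.symm x)) = c • T x) (x : M) : T (w.symm x) = c • w.symm (T x) := by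
  rw [← map_smul, ← h, symm_apply_apply]

end LinearEquiv

open Finsupp

section

variable {V : Type*} [AddCommGroup V] [Module ℂ V] {q : ℝ} {w : V ≃ₗ[ℂ] V}
  {T S R : V →ₗ[ℂ] V} {b d F : (ℕ →₀ V) →ₗ[ℂ] (ℕ →₀ V)}

-- `n - 1` truncates at `n = 0`, where the factor `lam q 0 = 0` kills the junk term.
lemma lam_smul_map_single_pred
    (hd : ∀ (η : V) (n : ℕ), d (single n η) = (lam q (n + 1) : ℂ) • single (n + 1) η)
    (n : ℕ) (η : V) :
    (lam q n : ℂ) • d (single (n - 1) η) = ((lam q n : ℂ) ^ 2) • single n η := by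
  cases n with
  | zero => simp [lam_zero]
  | succ n => rw [Nat.add_sub_cancel, hd, smul_smul, sq]

variable (hb : ∀ (η : V) (n : ℕ),
      b (single n η) = -(((q ^ (n + 1) : ℝ)) : ℂ) • single n (w.symm η))
    (hd : ∀ (η : V) (n : ℕ),
      d (single n η) = (lam q (n + 1) : ℂ) • single (n + 1) η)
    (hF : ∀ (η : V) (n : ℕ),
      F (single n η) = (lam q n : ℂ) • single (n - 1) (T η)
        + single n ((w ^ n) (R ((w.symm ^ n) η)))
        + (lam q (n + 1) : ℂ) • single (n + 1) (S η))
include hb hd hF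

lemma dFb_apply_single (n : ℕ) (η : V) :
    d (F (b (single n η))) = -((q : ℂ) ^ (n + 1)) •
      ((lam q n : ℂ) ^ 2 • single n (T (w.symm η))
        + (lam q (n + 1) : ℂ) • single (n + 1) ((w ^ n) (R ((w.symm ^ (n + 1)) η)))
        + ((lam q (n + 1) : ℂ) * lam q (n + 2)) • single (n + 2) (S (w.symm η))) := by
  simp only [hb, map_smul, hF, map_add, lam_smul_map_single_pred hd,
    LinearEquiv.pow_apply_symm_apply]
  simp only [hd]
  match_scalars <;> ring

lemma bFd_apply_single (n : ℕ) (η : V) :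
    b (F (d (single n η))) = -((lam q (n + 1) : ℂ) * q ^ (n + 1)) •
      ((lam q (n + 1) : ℂ) • single n (w.symm (T η))
        + (q : ℂ) • single (n + 1) (w.symm ((w ^ (n + 1)) (R ((w.symm ^ (n + 1)) η))))
        + ((q : ℂ) ^ 2 * lam q (n + 2)) • single (n + 2) (w.symm (S η))) := by
  simp only [hd, map_smul, hF, map_add, hb, Nat.add_sub_cancel]
  match_scalars <;> ring

lemma omega0_apply_single (hq : |q| ≤ 1) (hq0 : q ≠ 0)
    (hT : ∀ η : V, T (w.symm η) = (q : ℂ) • w.symm (T η))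
    (hS : ∀ η : V, S (w.symm η) = (q : ℂ) • w.symm (S η)) (n : ℕ) (η : V) :
    (d ∘ₗ F ∘ₗ b - ((q⁻¹ : ℝ) : ℂ) • (b ∘ₗ F ∘ₗ d)) (single n η)
      = -(((q - q⁻¹) * q ^ (n + 1) : ℝ) : ℂ) • single n (w.symm (T η)) := by
  have hlam : ∀ m, (lam q m : ℂ) ^ 2 = 1 - (q : ℂ) ^ (2 * m) := fun m => by exact_mod_cast lam_sq hq m
  have hqC : (q : ℂ) ≠ 0 := Complex.ofReal_ne_zero.mpr hq0
  simp only [LinearMap.sub_apply, LinearMap.smul_apply, LinearMap.comp_apply,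
    dFb_apply_single hb hd hF, bFd_apply_single hb hd hF, hT, hS,
    LinearEquiv.symm_apply_pow_succ_apply, ← Finsupp.smul_single]
  match_scalars
  · field_simp
    linear_combination hlam (n + 1) - (q : ℂ) ^ 2 * hlam n
  all_goals field_simp; ring

end

theorem omega0_formula_general
    (q : ℝ) (hq0 : 0 < q) (hq1 : q < 1)
    (V : Type*) [AddCommGroup V] [Module ℂ V]
    (w : V ≃ₗ[ℂ] V) (T S R : V →ₗ[ℂ] V)
    (hT : ∀ η : V, w (T (w.symm η)) = (q : ℂ) • T η)
    (hS : ∀ η : V, w (S (w.symm η)) = (q : ℂ) • S η)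
    (b d F : (ℕ →₀ V) →ₗ[ℂ] (ℕ →₀ V))
    (hb : ∀ (η : V) (n : ℕ),
      b (Finsupp.single n η) = -(((q ^ (n + 1) : ℝ)) : ℂ) • Finsupp.single n (w.symm η))
    (hd : ∀ (η : V) (n : ℕ),
      d (Finsupp.single n η) = (lam q (n + 1) : ℂ) • Finsupp.single (n + 1) η)
    (hF : ∀ (η : V) (n : ℕ),
      F (Finsupp.single n η) = (lam q n : ℂ) • Finsupp.single (n - 1) (T η)
        + Finsupp.single n ((w ^ n) (R ((w.symm ^ n) η)))
        + (lam q (n + 1) : ℂ) • Finsupp.single (n + 1) (S η))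
    (That : (ℕ →₀ V) →ₗ[ℂ] (ℕ →₀ V))
    (hThat : ∀ (η : V) (n : ℕ), That (Finsupp.single n η) = Finsupp.single n (T η))
    :
    (∀ (η : V) (n : ℕ),
        (d ∘ₗ F ∘ₗ b - ((q⁻¹ : ℝ) : ℂ) • (b ∘ₗ F ∘ₗ d)) (Finsupp.single n η)
          = -(((q - q⁻¹) * q ^ (n + 1) : ℝ) : ℂ) • Finsupp.single n (w.symm (T η)))
    ∧ d ∘ₗ F ∘ₗ b - ((q⁻¹ : ℝ) : ℂ) • (b ∘ₗ F ∘ₗ d)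
        = ((q - q⁻¹ : ℝ) : ℂ) • (b ∘ₗ That) := by
  have hq : |q| ≤ 1 := (abs_of_pos hq0).trans_le hq1.le
  have hΩ := omega0_apply_single hb hd hF hq hq0.ne'
    (w.apply_symm_apply_of_conj_eq_smul hT) (w.apply_symm_apply_of_conj_eq_smul hS)
  refine ⟨fun η n => hΩ n η, Finsupp.lhom_ext fun n η => ?_⟩
  rw [hΩ, LinearMap.smul_apply, LinearMap.comp_apply, hThat, hb, smul_smul]
  match_scalars
  ring

/-- The formula `Ω₀ = λ π(b) T` of Theorem 4, equation (6.7), where `Ω₀ = π(d)Fπ(b) − q⁻¹π(b)Fπ(d)` and `That` is the diagonal lift of `T`. -/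
theorem omega0_formula
    (q : ℝ) (hq0 : 0 < q) (hq1 : q < 1)
    (V : Type*) [AddCommGroup V] [Module ℂ V]
    (w : V ≃ₗ[ℂ] V) (T S R : V →ₗ[ℂ] V)
    (hT : ∀ η : V, w (T (w.symm η)) = (q : ℂ) • T η)
    (hS : ∀ η : V, w (S (w.symm η)) = (q : ℂ) • S η)
    (hR : ∀ η : V, w (w (R (w.symm (w.symm η)))) + ((q ^ 2 : ℝ) : ℂ) • R η
            = ((1 + q ^ 2 : ℝ) : ℂ) • w (R (w.symm η)))
    (a b c d F : (ℕ →₀ V) →ₗ[ℂ] (ℕ →₀ V))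
    (ha : ∀ (η : V) (n : ℕ),
      a (Finsupp.single n η) = (lam q n : ℂ) • Finsupp.single (n - 1) η)
    (hb : ∀ (η : V) (n : ℕ),
      b (Finsupp.single n η) = -(((q ^ (n + 1) : ℝ)) : ℂ) • Finsupp.single n (w.symm η))
    (hc : ∀ (η : V) (n : ℕ),
      c (Finsupp.single n η) = ((q ^ n : ℝ) : ℂ) • Finsupp.single n (w η))
    (hd : ∀ (η : V) (n : ℕ),
      d (Finsupp.single n η) = (lam q (n + 1) : ℂ) • Finsupp.single (n + 1) η)
    (hF : ∀ (η : V) (n : ℕ),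
      F (Finsupp.single n η) = (lam q n : ℂ) • Finsupp.single (n - 1) (T η)
        + Finsupp.single n ((w ^ n) (R ((w.symm ^ n) η)))
        + (lam q (n + 1) : ℂ) • Finsupp.single (n + 1) (S η))
    (That : (ℕ →₀ V) →ₗ[ℂ] (ℕ →₀ V))
    (hThat : ∀ (η : V) (n : ℕ), That (Finsupp.single n η) = Finsupp.single n (T η))
    :
    (∀ (η : V) (n : ℕ),
        (d ∘ₗ F ∘ₗ b - ((q⁻¹ : ℝ) : ℂ) • (b ∘ₗ F ∘ₗ d)) (Finsupp.single n η)
          = -(((q - q⁻¹) * q ^ (n + 1) : ℝ) : ℂ) • Finsupp.single n (w.symm (T η)))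
    ∧ d ∘ₗ F ∘ₗ b - ((q⁻¹ : ℝ) : ℂ) • (b ∘ₗ F ∘ₗ d)
        = ((q - q⁻¹ : ℝ) : ℂ) • (b ∘ₗ That) :=
  omega0_formula_general q hq0 hq1 V w T S R hT hS b d F hb hd hF That hThat
end

section
/- With the notation of the model, for all η ∈ V and n ∈ ℕ one has (−q·c∘F∘a + a∘F∘c) η_n = −λ qⁿ (wSη)_n; equivalently, −q·c∘F∘a + a∘F∘c = −λ·c∘Ŝ, where Ŝ denotes the diagonal lift of S to W given by Ŝ η_n := (Sη)_n. -/
/-- The formula `Ω₂ = −λ π(c) T*` of Theorem 4, equation (6.7), where `Ω₂ = −q π(c)Fπ(a) + π(a)Fπ(c)` and `Shat` is the diagonal lift of `S` (the role of `T*`). -/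
theorem omega2_formula
    (q : ℝ) (hq0 : 0 < q) (hq1 : q < 1)
    (V : Type*) [AddCommGroup V] [Module ℂ V]
    (w : V ≃ₗ[ℂ] V) (T S R : V →ₗ[ℂ] V)
    (hT : ∀ η : V, w (T (w.symm η)) = (q : ℂ) • T η)
    (hS : ∀ η : V, w (S (w.symm η)) = (q : ℂ) • S η)
    (hR : ∀ η : V, w (w (R (w.symm (w.symm η)))) + ((q ^ 2 : ℝ) : ℂ) • R η
            = ((1 + q ^ 2 : ℝ) : ℂ) • w (R (w.symm η)))
    (a b c d F : (ℕ →₀ V) →ₗ[ℂ] (ℕ →₀ V))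
    (ha : ∀ (η : V) (n : ℕ),
      a (Finsupp.single n η) = (lam q n : ℂ) • Finsupp.single (n - 1) η)
    (hb : ∀ (η : V) (n : ℕ),
      b (Finsupp.single n η) = -(((q ^ (n + 1) : ℝ)) : ℂ) • Finsupp.single n (w.symm η))
    (hc : ∀ (η : V) (n : ℕ),
      c (Finsupp.single n η) = ((q ^ n : ℝ) : ℂ) • Finsupp.single n (w η))
    (hd : ∀ (η : V) (n : ℕ),
      d (Finsupp.single n η) = (lam q (n + 1) : ℂ) • Finsupp.single (n + 1) η)
    (hF : ∀ (η : V) (n : ℕ),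
      F (Finsupp.single n η) = (lam q n : ℂ) • Finsupp.single (n - 1) (T η)
        + Finsupp.single n ((w ^ n) (R ((w.symm ^ n) η)))
        + (lam q (n + 1) : ℂ) • Finsupp.single (n + 1) (S η))
    (Shat : (ℕ →₀ V) →ₗ[ℂ] (ℕ →₀ V))
    (hShat : ∀ (η : V) (n : ℕ), Shat (Finsupp.single n η) = Finsupp.single n (S η))
    :
    (∀ (η : V) (n : ℕ),
        (-(q : ℂ) • (c ∘ₗ F ∘ₗ a) + a ∘ₗ F ∘ₗ c) (Finsupp.single n η)
          = -(((q - q⁻¹) * q ^ n : ℝ) : ℂ) • Finsupp.single n (w (S η)))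
    ∧ -(q : ℂ) • (c ∘ₗ F ∘ₗ a) + a ∘ₗ F ∘ₗ c
        = -((q - q⁻¹ : ℝ) : ℂ) • (c ∘ₗ Shat) := by
  have hqC : (q : ℂ) ≠ 0 := by exact_mod_cast hq0.ne'
  have hlam0 : lam q 0 = 0 := by simp [lam]
  have hlamsq : ∀ n : ℕ, (lam q n : ℂ) * (lam q n : ℂ) = 1 - (q : ℂ) ^ (2 * n) := by
    intro n
    have h1 : q ^ (2 * n) ≤ 1 := pow_le_one₀ hq0.le hq1.le
    have : (lam q n) * (lam q n) = 1 - q ^ (2 * n) :=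
      Real.mul_self_sqrt (by linarith : (0:ℝ) ≤ 1 - q ^ (2*n))
    exact_mod_cast this
  have hSw : ∀ η : V, S (w η) = (q : ℂ)⁻¹ • w (S η) := by
    intro η
    have h := hS (w η); rw [w.symm_apply_apply] at h
    rw [h, smul_smul, inv_mul_cancel₀ hqC, one_smul]
  have hTw : ∀ η : V, T (w η) = (q : ℂ)⁻¹ • w (T η) := by
    intro η
    have h := hT (w η); rw [w.symm_apply_apply] at h
    rw [h, smul_smul, inv_mul_cancel₀ hqC, one_smul]
  have hmid : ∀ (k : ℕ) (η : V),
      (w ^ (k+1)) (R ((w.symm ^ (k+1)) (w η))) = w ((w ^ k) (R ((w.symm ^ k) η))) := by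
    intro k η
    have h1 : (w.symm ^ (k+1)) (w η) = (w.symm ^ k) η := by
      rw [pow_succ]
      show (w.symm ^ k) (w.symm (w η)) = _
      rw [w.symm_apply_apply]
    rw [h1, pow_succ']
    rfl
  have key : ∀ (η : V) (n : ℕ),
      (-(q : ℂ) • (c ∘ₗ F ∘ₗ a) + a ∘ₗ F ∘ₗ c) (Finsupp.single n η)
        = -(((q - q⁻¹) * q ^ n : ℝ) : ℂ) • Finsupp.single n (w (S η)) := by
    intro η n
    match n with
    | 0 =>
      simp only [LinearMap.add_apply, LinearMap.smul_apply, LinearMap.comp_apply,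
        ha, hc, hF, hlam0, Complex.ofReal_zero, zero_smul, map_zero, smul_zero,
        map_add, map_smul, pow_zero, Complex.ofReal_one, one_smul, Nat.zero_sub,
        hSw, hTw, hmid, neg_zero, zero_add, Nat.sub_self, ← Finsupp.smul_single]
      have hq1c : (q:ℂ) * (q:ℂ)⁻¹ = 1 := mul_inv_cancel₀ hqC
      match_scalars
      linear_combination ((q:ℂ)⁻¹) * hlamsq 1 + (-(q:ℂ)) * hq1c
    | 1 =>
      simp only [LinearMap.add_apply, LinearMap.smul_apply, LinearMap.comp_apply,
        ha, hc, hF, map_add, map_smul, Nat.add_sub_cancel, hSw, hTw, hmid,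
        hlam0, Complex.ofReal_zero, zero_smul, smul_zero, zero_add, Nat.sub_self,
        ← Finsupp.smul_single]
      have hq1c : (q:ℂ) * (q:ℂ)⁻¹ = 1 := mul_inv_cancel₀ hqC
      match_scalars
      · ring
      · linear_combination (-(q:ℂ)^2) * hlamsq 1 + ((q:ℂ)*(q:ℂ)⁻¹) * hlamsq (1+1)
          + (-(q:ℂ)^4) * hq1c
    | (m+2) =>
      simp only [LinearMap.add_apply, LinearMap.smul_apply, LinearMap.comp_apply,
        ha, hc, hF, map_add, map_smul, Nat.add_sub_cancel, hSw, hTw, hmid,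
        show m + 2 - 1 = m + 1 from rfl, show m + 1 - 1 = m from rfl,
        ← Finsupp.smul_single]
      have hq1c : (q:ℂ) * (q:ℂ)⁻¹ = 1 := mul_inv_cancel₀ hqC
      match_scalars
      · linear_combination ((lam q (m+2) : ℂ) * (lam q (m+1) : ℂ) * (q:ℂ)^(m+1)) * hq1c
      · ring
      · linear_combination (-(q:ℂ)^(m+3)) * hlamsq (m+2)
          + ((q:ℂ)^(m+2) * (q:ℂ)⁻¹) * hlamsq (m+1+1+1)
          + (-(q:ℂ)^(3*m+7)) * hq1c
  refine ⟨key, ?_⟩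
  apply Finsupp.lhom_ext
  intro n η
  rw [key η n]
  simp only [LinearMap.smul_apply, LinearMap.comp_apply, hShat, hc, smul_smul,
    neg_smul, neg_mul]
  push_cast
  ring_nf
end

section
/- With the notation of the model, for all η ∈ V and n ∈ ℕ one has (d∘F∘a − q⁻¹·b∘F∘c − F) η_n = ((w^{n−1}∘R∘w^{1−n})η − (wⁿ∘R∘w⁻ⁿ)η)_n (for n = 0 this reads ((w⁻¹∘R∘w)η − Rη)₀). Consequently, setting R′ := (1+q²)⁻¹(R − w∘R∘w⁻¹), one has (d∘F∘a − q⁻¹·b∘F∘c − F) η_n = (1+q²) q^{2n−2} (R′η)_n for all η ∈ V and n ∈ ℕ. -/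
section aux
variable {V : Type*} [AddCommGroup V] [Module ℂ V]

private lemma zadd (w : V ≃ₗ[ℂ] V) (i j : ℤ) (v : V) :
    (w ^ (i+j)) v = (w^i) ((w^j) v) := by rw [zpow_add]; rfl

private lemma wpcongr (w : V ≃ₗ[ℂ] V) {i i' : ℤ} (h : i = i') (v : V) :
    (w^i) v = (w^i') v := by subst h; rfl

private lemma wcongr (w : V ≃ₗ[ℂ] V) (R : V →ₗ[ℂ] V) {i i' j j' : ℤ}
    (hi : i = i') (hj : j = j') (v : V) :
    (w^i) (R ((w^j) v)) = (w^i') (R ((w^j') v)) := by subst hi; subst hj; rfl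

private lemma wnat (w : V ≃ₗ[ℂ] V) (k : ℕ) (v : V) : (w ^ k) v = (w ^ (k:ℤ)) v := by
  rw [zpow_natCast]

private lemma wsymmnat (w : V ≃ₗ[ℂ] V) (k : ℕ) (v : V) :
    (w.symm ^ k) v = (w ^ (-(k:ℤ))) v := by
  rw [zpow_neg, zpow_natCast, ← inv_pow]; rfl

private lemma wsymmz (w : V ≃ₗ[ℂ] V) (v : V) : w.symm v = (w ^ (-1:ℤ)) v := by
  rw [zpow_neg_one]; rfl

private lemma wonez (w : V ≃ₗ[ℂ] V) (v : V) : w v = (w ^ (1:ℤ)) v := by rw [zpow_one]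

private lemma hstep (q : ℝ) (w : V ≃ₗ[ℂ] V) (R : V →ₗ[ℂ] V)
    (hR : ∀ η : V, w (w (R (w.symm (w.symm η)))) + ((q ^ 2 : ℝ) : ℂ) • R η
            = ((1 + q ^ 2 : ℝ) : ℂ) • w (R (w.symm η))) :
    ∀ (k : ℤ) (v : V),
    (w ^ k) (R ((w ^ (-k)) v)) - (w ^ (k+1)) (R ((w ^ (-(k+1))) v))
      = ((q^2:ℝ):ℂ) • ((w ^ (k-1)) (R ((w ^ (1-k)) v)) - (w ^ k) (R ((w ^ (-k)) v))) := by
  intro k v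
  have h := hR ((w ^ (1-k)) v)
  have e1 : w.symm (w.symm ((w ^ (1-k)) v)) = (w ^ (-(k+1))) v := by
    rw [wsymmz w ((w ^ (1-k)) v), wsymmz, ← zadd, ← zadd]
    exact wpcongr w (by ring) v
  have e2 : w.symm ((w ^ (1-k)) v) = (w ^ (-k)) v := by
    rw [wsymmz, ← zadd]
    exact wpcongr w (by ring) v
  rw [e1, e2] at h
  have h2 := congrArg (w ^ (k-1) : V ≃ₗ[ℂ] V) h
  simp only [map_add, map_smul] at h2
  have e3 : ∀ u : V, (w ^ (k-1)) (w (w u)) = (w ^ (k+1)) u := by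
    intro u
    rw [wonez w u, wonez w ((w ^ (1:ℤ)) u), ← zadd, ← zadd]
    exact wpcongr w (by ring) u
  have e4 : ∀ u : V, (w ^ (k-1)) (w u) = (w ^ k) u := by
    intro u
    rw [wonez w u, ← zadd]
    exact wpcongr w (by ring) u
  rw [e3, e4] at h2
  have hY : (w ^ (k+1)) (R ((w ^ (-(k+1))) v))
      = ((1 + q^2:ℝ):ℂ) • (w ^ k) (R ((w ^ (-k)) v))
        - ((q^2:ℝ):ℂ) • (w ^ (k-1)) (R ((w ^ (1-k)) v)) := by
    rw [← h2]; abel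
  rw [hY]
  push_cast
  module

private lemma hkey (q : ℝ) (hq0 : 0 < q) (w : V ≃ₗ[ℂ] V) (R : V →ₗ[ℂ] V)
    (hR : ∀ η : V, w (w (R (w.symm (w.symm η)))) + ((q ^ 2 : ℝ) : ℂ) • R η
            = ((1 + q ^ 2 : ℝ) : ℂ) • w (R (w.symm η))) :
    ∀ (n : ℕ) (v : V),
    (w ^ ((n:ℤ)-1)) (R ((w ^ (1-(n:ℤ))) v)) - (w ^ (n:ℤ)) (R ((w ^ (-(n:ℤ))) v))
      = ((q ^ (2*(n:ℤ)-2) : ℝ):ℂ) • (R v - w (R (w.symm v))) := by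
  have hq : (q:ℝ) ≠ 0 := ne_of_gt hq0
  intro n v
  induction n with
  | zero =>
    have h0 := hstep q w R hR 0 v
    have ew0 : ∀ u : V, (w ^ (0:ℤ)) u = u := fun u => by rw [zpow_zero]; rfl
    simp only [Nat.cast_zero, zero_sub, zero_add, neg_zero, sub_zero, mul_zero] at h0 ⊢
    rw [ew0, ew0] at h0 ⊢
    rw [← wonez, ← wsymmz] at h0 ⊢
    rw [h0, smul_smul, ← Complex.ofReal_mul]
    have hs : q ^ (-2:ℤ) * q ^ (2:ℕ) = 1 := by
      rw [show ((-2):ℤ) = -((2:ℕ):ℤ) by norm_num, zpow_neg, zpow_natCast]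
      field_simp
    rw [hs]
    norm_num
  | succ m ih =>
    have h := hstep q w R hR (m:ℤ) v
    have e1 : ((m:ℤ)+1) = ((m+1:ℕ):ℤ) := by push_cast; ring
    have e3 : (((m+1:ℕ)):ℤ)-1 = (m:ℤ) := by push_cast; ring
    have e4 : (1-(((m+1:ℕ)):ℤ)) = -(m:ℤ) := by push_cast; ring
    rw [e3, e4]
    rw [e1] at h
    rw [h, ih, smul_smul, ← Complex.ofReal_mul]
    congr 2
    rw [← zpow_natCast q 2, ← zpow_add₀ hq]
    congr 1
    push_cast; ring
end aux

set_option maxRecDepth 10000 in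
/-- The computation of `Ω₁ = π(d)Fπ(a) − q⁻¹π(b)Fπ(c) − F` in the proof of Theorem 4 of the paper, together with the consequence `Ω₁ η_n = (1+q²) q^(2n−2) (R′η)_n` for `R′ = (1+q²)⁻¹(R − wRw⁻¹)`. -/
theorem omega1_formula
    (q : ℝ) (hq0 : 0 < q) (hq1 : q < 1)
    (V : Type*) [AddCommGroup V] [Module ℂ V]
    (w : V ≃ₗ[ℂ] V) (T S R : V →ₗ[ℂ] V)
    (hT : ∀ η : V, w (T (w.symm η)) = (q : ℂ) • T η)
    (hS : ∀ η : V, w (S (w.symm η)) = (q : ℂ) • S η)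
    (hR : ∀ η : V, w (w (R (w.symm (w.symm η)))) + ((q ^ 2 : ℝ) : ℂ) • R η
            = ((1 + q ^ 2 : ℝ) : ℂ) • w (R (w.symm η)))
    (a b c d F : (ℕ →₀ V) →ₗ[ℂ] (ℕ →₀ V))
    (ha : ∀ (η : V) (n : ℕ),
      a (Finsupp.single n η) = (lam q n : ℂ) • Finsupp.single (n - 1) η)
    (hb : ∀ (η : V) (n : ℕ),
      b (Finsupp.single n η) = -(((q ^ (n + 1) : ℝ)) : ℂ) • Finsupp.single n (w.symm η))
    (hc : ∀ (η : V) (n : ℕ),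
      c (Finsupp.single n η) = ((q ^ n : ℝ) : ℂ) • Finsupp.single n (w η))
    (hd : ∀ (η : V) (n : ℕ),
      d (Finsupp.single n η) = (lam q (n + 1) : ℂ) • Finsupp.single (n + 1) η)
    (hF : ∀ (η : V) (n : ℕ),
      F (Finsupp.single n η) = (lam q n : ℂ) • Finsupp.single (n - 1) (T η)
        + Finsupp.single n ((w ^ n) (R ((w.symm ^ n) η)))
        + (lam q (n + 1) : ℂ) • Finsupp.single (n + 1) (S η))
    (R' : V →ₗ[ℂ] V)
    (hR' : ∀ η : V, R' η = ((1 + q ^ 2 : ℝ) : ℂ)⁻¹ • (R η - w (R (w.symm η))))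
    :
    (∀ (η : V) (n : ℕ),
        (d ∘ₗ F ∘ₗ a - ((q⁻¹ : ℝ) : ℂ) • (b ∘ₗ F ∘ₗ c) - F) (Finsupp.single n η)
          = Finsupp.single n
              ((w ^ ((n : ℤ) - 1)) (R ((w ^ (1 - (n : ℤ))) η))
                - (w ^ (n : ℤ)) (R ((w ^ (-(n : ℤ))) η))))
    ∧ (∀ (η : V) (n : ℕ),
        (d ∘ₗ F ∘ₗ a - ((q⁻¹ : ℝ) : ℂ) • (b ∘ₗ F ∘ₗ c) - F) (Finsupp.single n η)
          = (((1 + q ^ 2) * q ^ (2 * (n : ℤ) - 2) : ℝ) : ℂ) • Finsupp.single n (R' η)) := by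
  have hqC : (q:ℂ) ≠ 0 := Complex.ofReal_ne_zero.mpr (ne_of_gt hq0)
  have hlam0 : lam q 0 = 0 := by simp [lam]
  have hsq : ∀ k : ℕ, ((lam q k : ℝ):ℂ) * ((lam q k : ℝ):ℂ) = 1 - (q:ℂ) ^ (2*k) := by
    intro k
    have h1 : q ^ (2*k) ≤ 1 := pow_le_one₀ (le_of_lt hq0) (le_of_lt hq1)
    have h : lam q k * lam q k = 1 - q ^ (2*k) := Real.mul_self_sqrt (by linarith)
    rw [← Complex.ofReal_mul, h]
    push_cast; ring
  have hT' : ∀ ξ : V, w.symm (T (w ξ)) = ((q:ℂ))⁻¹ • T ξ := by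
    intro ξ
    have h := hT (w ξ)
    rw [w.symm_apply_apply] at h
    have h2 : T (w ξ) = ((q:ℂ))⁻¹ • w (T ξ) := by
      rw [h, smul_smul, inv_mul_cancel₀ hqC, one_smul]
    rw [h2, map_smul, w.symm_apply_apply]
  have hS' : ∀ ξ : V, w.symm (S (w ξ)) = ((q:ℂ))⁻¹ • S ξ := by
    intro ξ
    have h := hS (w ξ)
    rw [w.symm_apply_apply] at h
    have h2 : S (w ξ) = ((q:ℂ))⁻¹ • w (S ξ) := by
      rw [h, smul_smul, inv_mul_cancel₀ hqC, one_smul]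
    rw [h2, map_smul, w.symm_apply_apply]
  have hmid2 : ∀ (n : ℕ) (η : V),
      (w^n) (R ((w.symm^n) η)) = (w^(n:ℤ)) (R ((w^(-(n:ℤ))) η)) := by
    intro n η
    rw [wnat, wsymmnat]
  have hmid3 : ∀ (k : ℤ) (ξ : V),
      w.symm ((w^k) (R ((w^(-k)) (w ξ)))) = (w^(k-1)) (R ((w^(1-k)) ξ)) := by
    intro k ξ
    rw [wonez w ξ, ← zadd, wsymmz, ← zadd]
    exact wcongr w R (by ring) (by ring) ξ
  have main : ∀ (η : V) (n : ℕ),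
      (d ∘ₗ F ∘ₗ a - ((q⁻¹ : ℝ) : ℂ) • (b ∘ₗ F ∘ₗ c) - F) (Finsupp.single n η)
        = Finsupp.single n
            ((w ^ ((n : ℤ) - 1)) (R ((w ^ (1 - (n : ℤ))) η))
              - (w ^ (n : ℤ)) (R ((w ^ (-(n : ℤ))) η))) := by
    intro η n
    match n with
    | 0 =>
      simp only [LinearMap.sub_apply, LinearMap.comp_apply, LinearMap.smul_apply,
        ha, hb, hc, hd, hF, map_add, map_smul, map_neg, hlam0, Complex.ofReal_zero,
        zero_smul, smul_zero, map_zero, zero_add, add_zero, zero_sub, Nat.zero_sub,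
        hmid2, hmid3, hT', hS', Finsupp.single_sub, ← Finsupp.smul_single]
      match_scalars <;> (push_cast; field_simp; try ring)
    | 1 =>
      simp only [LinearMap.sub_apply, LinearMap.comp_apply, LinearMap.smul_apply,
        ha, hb, hc, hd, hF, map_add, map_smul, map_neg, hlam0, Complex.ofReal_zero,
        zero_smul, smul_zero, map_zero, zero_add, add_zero, zero_sub, Nat.zero_sub,
        Nat.add_sub_cancel, hmid2, hmid3, hT', hS', Finsupp.single_sub,
        ← Finsupp.smul_single, show (1:ℕ)-1 = 0 from rfl]
      rw [wcongr w R (show (((0:ℕ)):ℤ) = ((1:ℕ):ℤ)-1 by omega)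
        (show (-((0:ℕ):ℤ)) = 1-((1:ℕ):ℤ) by omega) η]
      match_scalars <;> (push_cast; field_simp)
      · linear_combination hsq 1
      · linear_combination ((lam q 2 : ℝ) : ℂ) * hsq 1
      · ring
    | (m+2) =>
      simp only [LinearMap.sub_apply, LinearMap.comp_apply, LinearMap.smul_apply,
        ha, hb, hc, hd, hF, map_add, map_smul, map_neg, hlam0, Complex.ofReal_zero,
        zero_smul, smul_zero, map_zero, zero_add, add_zero, zero_sub, Nat.zero_sub,
        Nat.add_sub_cancel, hmid2, hmid3, hT', hS', Finsupp.single_sub,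
        ← Finsupp.smul_single, show ∀ m:ℕ, m+2-1 = m+1 from fun _ => rfl,
        show ∀ m:ℕ, m+1-1 = m from fun _ => rfl]
      simp only [Nat.add_assoc, Nat.reduceAdd]
      rw [wcongr w R (show (((m+1:ℕ)):ℤ) = ((m+2:ℕ):ℤ)-1 by omega)
        (show (-((m+1:ℕ):ℤ)) = 1-((m+2:ℕ):ℤ) by omega) η]
      match_scalars <;> (push_cast; field_simp)
      · linear_combination ((q:ℂ) * (q:ℂ) * ((lam q (m+2) : ℝ) : ℂ)) * hsq (m+1)
      · linear_combination (q:ℂ) * hsq (m+2)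
      · linear_combination ((q:ℂ) * (q:ℂ) * ((lam q (m+3) : ℝ) : ℂ)) * hsq (m+2)
  refine ⟨main, ?_⟩
  intro η n
  rw [main η n, hR' η, Finsupp.smul_single]
  congr 1
  rw [hkey q hq0 w R hR n η, smul_smul]
  congr 1
  rw [Complex.ofReal_mul, mul_comm ((1+q^2:ℝ):ℂ), mul_assoc,
    mul_inv_cancel₀ (Complex.ofReal_ne_zero.mpr (by positivity)), mul_one]
end

section
/- With the notation below, Z′∘Z − q²·Z∘Z′ = (q² − 1)·id_W as linear maps on W. -/
noncomputable def zCoeff (q : ℝ) (n : ℕ) : ℝ := (q ^ n)⁻¹ * lam q n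

@[simp]
lemma zCoeff_zero (q : ℝ) : zCoeff q 0 = 0 := by
  simp [zCoeff, lam]

section Coefficients

variable {q : ℝ}

lemma sq_lam (hq : q ^ 2 ≤ 1) (n : ℕ) : lam q n ^ 2 = 1 - q ^ (2 * n) := by
  rw [lam, Real.sq_sqrt (by rw [sub_nonneg, pow_mul]; exact pow_le_one₀ (sq_nonneg q) hq)]

lemma sq_zCoeff (hq0 : q ≠ 0) (hq : q ^ 2 ≤ 1) (n : ℕ) :
    zCoeff q n ^ 2 = (q ^ 2)⁻¹ ^ n - 1 := by
  have hp : (q ^ 2) ^ n ≠ 0 := pow_ne_zero n (pow_ne_zero 2 hq0)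
  rw [zCoeff, mul_pow, sq_lam hq, inv_pow, ← pow_mul, mul_comm n 2, pow_mul, inv_pow, mul_sub,
    mul_one, inv_mul_cancel₀ hp]

lemma sq_zCoeff_sub_sq_zCoeff_succ (hq0 : q ≠ 0) (hq : q ^ 2 ≤ 1) (n : ℕ) :
    zCoeff q n ^ 2 - q ^ 2 * zCoeff q (n + 1) ^ 2 = q ^ 2 - 1 := by
  rw [sq_zCoeff hq0 hq, sq_zCoeff hq0 hq, pow_succ' (q ^ 2)⁻¹ n, mul_sub,
    mul_inv_cancel_left₀ (pow_ne_zero 2 hq0)]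
  ring

end Coefficients

section ShiftOperators

variable {R V : Type*} [CommSemiring R] [AddCommMonoid V] [Module R V]
  {w : V ≃ₗ[R] V} {c : ℕ → R} {Z Z' : (ℕ →₀ V) →ₗ[R] (ℕ →₀ V)}

lemma lower_raise_single
    (hZ : ∀ (η : V) (n : ℕ), Z (Finsupp.single n η) = c n • Finsupp.single (n - 1) (w.symm η))
    (hZ' : ∀ (η : V) (n : ℕ), Z' (Finsupp.single n η) = c (n + 1) • Finsupp.single (n + 1) (w η))
    (η : V) (n : ℕ) :
    Z (Z' (Finsupp.single n η)) = c (n + 1) ^ 2 • Finsupp.single n η := by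
  rw [hZ', map_smul, hZ, Nat.add_sub_cancel, LinearEquiv.symm_apply_apply, smul_smul, ← sq]

lemma raise_lower_single (hc : c 0 = 0)
    (hZ : ∀ (η : V) (n : ℕ), Z (Finsupp.single n η) = c n • Finsupp.single (n - 1) (w.symm η))
    (hZ' : ∀ (η : V) (n : ℕ), Z' (Finsupp.single n η) = c (n + 1) • Finsupp.single (n + 1) (w η))
    (η : V) (n : ℕ) :
    Z' (Z (Finsupp.single n η)) = c n ^ 2 • Finsupp.single n η := by
  cases n with
  | zero => simp [hZ, hc]
  | succ m =>
    rw [hZ, map_smul, Nat.add_sub_cancel, hZ', LinearEquiv.apply_symm_apply, smul_smul, ← sq]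

end ShiftOperators

/-- Remark 2 of the paper: the operators `Z, Z′` modelling `π(z), π(z*)` for `z = ac⁻¹`
satisfy the relation `z*z − q²zz* = q² − 1`. -/
theorem z_relation (q : ℝ) (hq0 : 0 < q) (hq1 : q < 1)
    (V : Type*) [AddCommGroup V] [Module ℂ V]
    (w : V ≃ₗ[ℂ] V)
    (Z Z' : (ℕ →₀ V) →ₗ[ℂ] (ℕ →₀ V))
    (hZ : ∀ (η : V) (n : ℕ),
      Z (Finsupp.single n η)
        = (((q ^ n)⁻¹ * lam q n : ℝ) : ℂ) • Finsupp.single (n - 1) (w.symm η))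
    (hZ' : ∀ (η : V) (n : ℕ),
      Z' (Finsupp.single n η)
        = (((q ^ (n + 1))⁻¹ * lam q (n + 1) : ℝ) : ℂ) • Finsupp.single (n + 1) (w η)) :
    Z' ∘ₗ Z - ((q ^ 2 : ℝ) : ℂ) • (Z ∘ₗ Z')
      = ((q ^ 2 - 1 : ℝ) : ℂ) • (LinearMap.id : (ℕ →₀ V) →ₗ[ℂ] (ℕ →₀ V)) := by
  have hc : ((zCoeff q 0 : ℝ) : ℂ) = 0 := by simp
  have hq : q ^ 2 ≤ 1 := pow_le_one₀ hq0.le hq1.le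
  refine Finsupp.lhom_ext fun n η => ?_
  rw [LinearMap.sub_apply, LinearMap.smul_apply, LinearMap.comp_apply, LinearMap.comp_apply,
    raise_lower_single (c := fun n => (zCoeff q n : ℂ)) hc hZ hZ',
    lower_raise_single (c := fun n => (zCoeff q n : ℂ)) hZ hZ', smul_smul, ← sub_smul,
    LinearMap.smul_apply, LinearMap.id_apply, ← sq_zCoeff_sub_sq_zCoeff_succ hq0.ne' hq n]
  push_cast
  rfl
end
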